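/- arXiv:1908.05446 — 6 statements merged into one kernel-verified Lean document; each statement's English description precedes it below -/
import Mathlib

section
/- Let M be a commutative additive monoid which is reduced and atomic, let G be an additive commutative group, and let ι : M →+ G be an additive monoid homomorphism such that the family (ι a)_{a ∈ Atom M}, indexed by the set of atoms of M, is linearly independent over ℤ (in particular ι is injective on Atom M). Then M is free on its set of atoms: the canonical additive map (Atom M →₀ ℕ) →+ M, sending a finitely supported function c to ∑_{a} c(a) • a, is bijective. -/
/-- A commutative additive monoid is *reduced* if `a + b = 0` implies `a = 0` and `b = 0`. -/
def MonoidReduced (M : Type*) [AddCommMonoid M] : Prop :=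
  ∀ a b : M, a + b = 0 → a = 0 ∧ b = 0

/-- The set of *atoms* of a commutative additive monoid: nonzero elements `x` such that
`x = y + z` implies `y = 0` or `z = 0`. -/
def Atom (M : Type*) [AddCommMonoid M] : Set M :=
  {x | x ≠ 0 ∧ ∀ y z : M, x = y + z → y = 0 ∨ z = 0}

/-- A commutative additive monoid is *atomic* if every element is the sum of a finite
multiset of atoms. -/
def MonoidAtomic (M : Type*) [AddCommMonoid M] : Prop :=
  ∀ x : M, ∃ s : Multiset M, (∀ a ∈ s, a ∈ Atom M) ∧ s.sum = x

/-- The canonical additive map `(A →₀ ℕ) →+ M`, sending a finitely supported function `c`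
to `∑ a, c a • a`. -/
noncomputable def freeOnMap (M : Type*) [AddCommMonoid M] (A : Set M) : (A →₀ ℕ) →+ M :=
  Finsupp.liftAddHom fun a => multiplesHom M (a : M)

/-- `M` is *free on `A`* if the canonical map `(A →₀ ℕ) →+ M` is bijective. -/
def IsFreeOn (M : Type*) [AddCommMonoid M] (A : Set M) : Prop :=
  Function.Bijective (freeOnMap M A)

/-!
Followed by `ι`, the canonical map becomes the `ℤ`-linear combination of the images of the
atoms with the same coefficients, so linear independence makes it injective. Its range is a
submonoid containing every atom, hence, by atomicity, all of `M`.
-/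

section FreeOnMap

variable {M : Type*} [AddCommMonoid M] (A : Set M)

theorem freeOnMap_single_one (a : A) : freeOnMap M A (Finsupp.single a 1) = a := by
  simp [freeOnMap]

theorem AddMonoidHom.map_freeOnMap {G : Type*} [AddCommGroup G] (ι : M →+ G) (c : A →₀ ℕ) :
    ι (freeOnMap M A c) =
      Finsupp.linearCombination ℤ (fun a : A => ι a) (c.mapRange Nat.cast Nat.cast_zero) := by
  rw [freeOnMap, Finsupp.liftAddHom_apply, Finsupp.linearCombination_apply,
    Finsupp.sum_mapRange_index (by simp), map_finsuppSum]
  exact Finsupp.sum_congr fun a _ => by simp [natCast_zsmul]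

theorem freeOnMap_injective_of_linearIndependent {G : Type*} [AddCommGroup G] (ι : M →+ G)
    (hli : LinearIndependent ℤ (fun a : A => ι a)) : Function.Injective (freeOnMap M A) := by
  intro c c' h
  apply Finsupp.mapRange_injective _ Nat.cast_zero (Nat.cast_injective (R := ℤ))
  apply hli
  rw [← ι.map_freeOnMap, ← ι.map_freeOnMap, h]

theorem multiset_sum_mem_mrange_freeOnMap {s : Multiset M} (hs : ∀ a ∈ s, a ∈ A) :
    s.sum ∈ AddMonoidHom.mrange (freeOnMap M A) :=
  AddSubmonoid.multiset_sum_mem _ s fun a ha =>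
    ⟨Finsupp.single ⟨a, hs a ha⟩ 1, freeOnMap_single_one A _⟩

end FreeOnMap

theorem free_of_linearIndependent_atoms_general (M : Type*) [AddCommMonoid M]
    (G : Type*) [AddCommGroup G] (ι : M →+ G)
    (hatomic : MonoidAtomic M)
    (hli : LinearIndependent ℤ (fun a : Atom M => ι (a : M))) :
    IsFreeOn M (Atom M) := by
  refine ⟨freeOnMap_injective_of_linearIndependent (Atom M) ι hli, fun x => ?_⟩
  obtain ⟨s, hs, rfl⟩ := hatomic x
  exact multiset_sum_mem_mrange_freeOnMap (Atom M) hs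

/-- If `M` is a reduced atomic commutative monoid and `ι : M →+ G` is a homomorphism to an
abelian group such that the images of the atoms are linearly independent over `ℤ`, then `M`
is free on its set of atoms. -/
theorem free_of_linearIndependent_atoms (M : Type*) [AddCommMonoid M]
    (G : Type*) [AddCommGroup G] (ι : M →+ G)
    (hred : MonoidReduced M) (hatomic : MonoidAtomic M)
    (hli : LinearIndependent ℤ (fun a : Atom M => ι (a : M))) :
    IsFreeOn M (Atom M) :=
  free_of_linearIndependent_atoms_general M G ι hatomic hli
end

section
/- Let M be a commutative additive monoid. Then M is half-factorial (atomic, and any two expressions of the same element as a sum of a finite multiset of atoms have the same number of summands) if and only if M admits a length-like function ν : M →+ ℕ satisfying ν(a) = 1 for every atom a of M. -/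
/-- A commutative additive monoid is *half-factorial* if it is atomic and any two finite
multisets of atoms with the same sum have the same cardinality. -/
def HalfFactorial (M : Type*) [AddCommMonoid M] : Prop :=
  MonoidAtomic M ∧ ∀ x : M, ∀ s t : Multiset M, (∀ a ∈ s, a ∈ Atom M) → (∀ a ∈ t, a ∈ Atom M) →
    s.sum = x → t.sum = x → Multiset.card s = Multiset.card t

section

variable {M : Type*} [AddCommMonoid M]

theorem exists_add_eq_of_notMem_atom {x : M} (hx : x ≠ 0) (hxa : x ∉ Atom M) :
    ∃ y z : M, y ≠ 0 ∧ z ≠ 0 ∧ y + z = x := by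
  by_contra! h
  exact hxa ⟨hx, fun y z hyz => or_iff_not_imp_left.2 fun hy => by_contra fun hz => h y z hy hz hyz.symm⟩

theorem monoidAtomic_of_forall_mem_closure (h : ∀ x : M, x ∈ AddSubmonoid.closure (Atom M)) :
    MonoidAtomic M :=
  fun x => AddSubmonoid.exists_multiset_of_mem_closure (h x)

theorem mem_closure_atom_of_map_eq_zero (ν : M →+ ℕ) (hν : ∀ x : M, ν x = 0 → x = 0) (x : M) :
    x ∈ AddSubmonoid.closure (Atom M) := by
  induction hn : ν x using Nat.strong_induction_on generalizing x with
  | _ n ih =>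
    by_cases hx : x = 0
    · exact hx ▸ zero_mem _
    by_cases hxa : x ∈ Atom M
    · exact AddSubmonoid.subset_closure hxa
    obtain ⟨y, z, hy, hz, rfl⟩ := exists_add_eq_of_notMem_atom hx hxa
    have hνy : ν y ≠ 0 := mt (hν y) hy
    have hνz : ν z ≠ 0 := mt (hν z) hz
    rw [map_add] at hn
    exact add_mem (ih (ν y) (by omega) y rfl) (ih (ν z) (by omega) z rfl)

theorem monoidAtomic_of_map_eq_zero (ν : M →+ ℕ) (hν : ∀ x : M, ν x = 0 → x = 0) :
    MonoidAtomic M :=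
  monoidAtomic_of_forall_mem_closure (mem_closure_atom_of_map_eq_zero ν hν)

theorem map_multiset_sum_eq_card (ν : M →+ ℕ) (hν : ∀ a ∈ Atom M, ν a = 1) {s : Multiset M}
    (hs : ∀ a ∈ s, a ∈ Atom M) : ν s.sum = Multiset.card s := by
  rw [map_multiset_sum, Multiset.map_congr rfl fun a ha => hν a (hs a ha), Multiset.map_const',
    Multiset.sum_replicate, smul_eq_mul, mul_one]

theorem halfFactorial_of_map_atom_eq_one (ν : M →+ ℕ) (hν₀ : ∀ x : M, ν x = 0 → x = 0)
    (hν₁ : ∀ a ∈ Atom M, ν a = 1) : HalfFactorial M := by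
  refine ⟨monoidAtomic_of_map_eq_zero ν hν₀, fun x s t hs ht hsx htx => ?_⟩
  rw [← map_multiset_sum_eq_card ν hν₁ hs, ← map_multiset_sum_eq_card ν hν₁ ht, hsx, htx]

namespace HalfFactorial

variable (h : HalfFactorial M)

noncomputable def factorization (x : M) : Multiset M :=
  Classical.choose (h.1 x)

theorem factorization_atom (x : M) : ∀ a ∈ h.factorization x, a ∈ Atom M :=
  (Classical.choose_spec (h.1 x)).1

theorem sum_factorization (x : M) : (h.factorization x).sum = x :=
  (Classical.choose_spec (h.1 x)).2

theorem card_factorization_sum {s : Multiset M} (hs : ∀ a ∈ s, a ∈ Atom M) :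
    Multiset.card (h.factorization s.sum) = Multiset.card s :=
  h.2 _ _ _ (h.factorization_atom _) hs (h.sum_factorization _) rfl

noncomputable def length : M →+ ℕ where
  toFun x := Multiset.card (h.factorization x)
  map_zero' := by simpa using h.card_factorization_sum (s := 0) (by simp)
  map_add' x y := by
    have hxy : ∀ a ∈ h.factorization x + h.factorization y, a ∈ Atom M := fun a ha =>
      (Multiset.mem_add.1 ha).elim (h.factorization_atom x a) (h.factorization_atom y a)
    simpa [h.sum_factorization] using h.card_factorization_sum hxy

theorem length_eq_zero {x : M} (hx : h.length x = 0) : x = 0 := by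
  rw [← h.sum_factorization x, Multiset.card_eq_zero.1 hx, Multiset.sum_zero]

theorem length_atom {a : M} (ha : a ∈ Atom M) : h.length a = 1 := by
  show Multiset.card (h.factorization a) = 1
  simpa using h.card_factorization_sum (s := {a}) (by simpa using ha)

end HalfFactorial

end

/-- A commutative additive monoid `M` is half-factorial if and only if it admits a length-like
function `ν : M →+ ℕ` (i.e. `ν x = 0 → x = 0`) with `ν a = 1` for every atom `a`. -/
theorem halfFactorial_iff_exists_lengthLike (M : Type*) [AddCommMonoid M] :
    HalfFactorial M ↔
      ∃ ν : M →+ ℕ, (∀ x : M, ν x = 0 → x = 0) ∧ ∀ a ∈ Atom M, ν a = 1 :=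
  ⟨fun h => ⟨h.length, fun _ => h.length_eq_zero, fun _ => h.length_atom⟩,
    fun ⟨ν, hν₀, hν₁⟩ => halfFactorial_of_map_atom_eq_one ν hν₀ hν₁⟩
end

section
/- Fix n : ℕ and let w be a permutation of Fin (n+1) which is 231-avoiding. Then the number of Bruhat inversions of w equals the cardinality of the support set of w: the cardinality of {(i, j) : Fin (n+1) × Fin (n+1) | i < j ∧ w⁻¹ j < w⁻¹ i ∧ ¬∃ l, i < l ∧ l < j ∧ w⁻¹ j < w⁻¹ l ∧ w⁻¹ l < w⁻¹ i} equals the cardinality of {i : Fin (n+1) | ∃ p ≤ i, i < w p}. -/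
/-!
Sending a Bruhat inversion `(i, j)` to `i` is a bijection onto the support. An inversion `(i, j)`
makes `w` move some position `p ≤ i` above `i`: either `p = w⁻¹ j`, or `w⁻¹ i > w⁻¹ j > i` and
then `w` cannot stabilise `{0, …, i}`. Conversely, if `p ≤ i < w p`, counting shows that some
value `a ≤ i` lies to the right of `w p`; 231-avoidance then puts `i` to the right of `w p` as
well, so `(i, w p)` is an inversion, and among the inversions `(i, j)` one with `w⁻¹ j` largest
is Bruhat. Under 231-avoidance the Bruhat inversion `(i, j)` is the one with the smallest `j`,
hence it is unique.
-/

namespace Equiv.Perm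

variable {α : Type*} [LinearOrder α] (w : Perm α)

def IsInversion (i j : α) : Prop :=
  i < j ∧ w⁻¹ j < w⁻¹ i

def IsBruhatInversion (i j : α) : Prop :=
  i < j ∧ w⁻¹ j < w⁻¹ i ∧ ¬∃ l, i < l ∧ l < j ∧ w⁻¹ j < w⁻¹ l ∧ w⁻¹ l < w⁻¹ i

def Avoids231 : Prop :=
  ¬∃ i l j, i < l ∧ l < j ∧ w⁻¹ l < w⁻¹ j ∧ w⁻¹ j < w⁻¹ i

variable {w}

lemma IsBruhatInversion.isInversion {i j : α} (h : w.IsBruhatInversion i j) :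
    w.IsInversion i j :=
  ⟨h.1, h.2.1⟩

lemma exists_le_lt_apply_of_lt_inv_apply [LocallyFiniteOrderBot α] {i a : α} (ha : a ≤ i)
    (hia : i < w⁻¹ a) : ∃ p ≤ i, i < w p := by
  by_contra! h
  have hmaps : Set.MapsTo w (Set.Iic i) (Set.Iic i) := h
  have hbij := ((Set.finite_Iic i).injOn_iff_bijOn_of_mapsTo hmaps).1 w.injective.injOn
  obtain ⟨p, hp, rfl⟩ := hbij.surjOn ha
  exact hia.not_ge (by simpa using hp)

lemma IsInversion.exists_le_lt_apply [LocallyFiniteOrderBot α] {i j : α}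
    (h : w.IsInversion i j) : ∃ p ≤ i, i < w p := by
  by_cases hj : w⁻¹ j ≤ i
  · exact ⟨w⁻¹ j, hj, by simpa using h.1⟩
  · exact exists_le_lt_apply_of_lt_inv_apply le_rfl ((not_le.1 hj).trans h.2)

lemma Avoids231.exists_isInversion [LocallyFiniteOrderBot α] (hw : w.Avoids231) {i p : α}
    (hpi : p ≤ i) (hip : i < w p) : ∃ j, w.IsInversion i j := by
  obtain ⟨a, hai, hia⟩ := exists_le_lt_apply_of_lt_inv_apply (w := w⁻¹) hpi (by simpa using hip)
  have hwp : w⁻¹ (w p) = p := w.symm_apply_apply p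
  refine ⟨w p, hip, ?_⟩
  by_contra! hle
  rw [hwp] at hle
  have hne : w⁻¹ i ≠ p := inv_eq_iff_eq.not.2 hip.ne
  have hai' : a < i := hai.lt_of_ne (by rintro rfl; exact hle.not_gt (hpi.trans_lt hia))
  have hic : w⁻¹ i < w⁻¹ (w p) := by rw [hwp]; exact hle.lt_of_ne hne
  have hca : w⁻¹ (w p) < w⁻¹ a := by rw [hwp]; exact hpi.trans_lt hia
  exact hw ⟨a, i, w p, hai', hip, hic, hca⟩

lemma IsInversion.exists_isBruhatInversion [Finite α] {i j : α} (h : w.IsInversion i j) :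
    ∃ k, w.IsBruhatInversion i k := by
  obtain ⟨k, hk, hmax⟩ :=
    (Set.toFinite {k | w.IsInversion i k}).exists_maximalFor (fun k => w⁻¹ k) _ ⟨j, h⟩
  refine ⟨k, hk.1, hk.2, ?_⟩
  rintro ⟨l, hil, -, hkl, hli⟩
  exact (hmax ⟨hil, hli⟩ hkl.le).not_gt hkl

lemma IsBruhatInversion.le_of_isInversion (hw : w.Avoids231) {i j k : α}
    (hj : w.IsBruhatInversion i j) (hk : w.IsInversion i k) : j ≤ k := by
  by_contra! hkj
  rcases lt_or_gt_of_ne (w⁻¹.injective.ne hkj.ne) with hlt | hgt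
  · exact hw ⟨i, k, j, hk.1, hkj, hlt, hj.2.1⟩
  · exact hj.2.2 ⟨k, hk.1, hkj, hgt, hk.2⟩

lemma IsBruhatInversion.eq (hw : w.Avoids231) {i j k : α}
    (hj : w.IsBruhatInversion i j) (hk : w.IsBruhatInversion i k) : j = k :=
  (hj.le_of_isInversion hw hk.isInversion).antisymm (hk.le_of_isInversion hw hj.isInversion)

end Equiv.Perm

/-- For a 231-avoiding permutation `w` of `Fin (n+1)`, the number of Bruhat inversions of `w`
equals the cardinality of the support set of `w`. -/
theorem card_bruhatInversions_eq_card_support (n : ℕ) (w : Equiv.Perm (Fin (n + 1)))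
    (havoid : ¬∃ i l j : Fin (n + 1), i < l ∧ l < j ∧ w⁻¹ l < w⁻¹ j ∧ w⁻¹ j < w⁻¹ i) :
    Nat.card {p : Fin (n + 1) × Fin (n + 1) |
        p.1 < p.2 ∧ w⁻¹ p.2 < w⁻¹ p.1 ∧
          ¬∃ l : Fin (n + 1), p.1 < l ∧ l < p.2 ∧ w⁻¹ p.2 < w⁻¹ l ∧ w⁻¹ l < w⁻¹ p.1} =
      Nat.card {i : Fin (n + 1) | ∃ p ≤ i, i < w p} := by
  have hw : w.Avoids231 := havoid
  refine Nat.card_congr (Set.BijOn.equiv Prod.fst ⟨?_, ?_, ?_⟩)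
  · rintro ⟨i, j⟩ (h : w.IsBruhatInversion i j)
    exact h.isInversion.exists_le_lt_apply
  · rintro ⟨i, j⟩ (hj : w.IsBruhatInversion i j) ⟨_, k⟩ (hk : w.IsBruhatInversion _ k) rfl
    rw [hj.eq hw hk]
  · rintro i ⟨p, hpi, hip⟩
    obtain ⟨j, hj⟩ := hw.exists_isInversion hpi hip
    obtain ⟨k, hk⟩ := hj.exists_isBruhatInversion
    exact ⟨(i, k), hk, rfl⟩
end

section
/- Fix n : ℕ and let w be a 231-avoiding permutation of Fin (n+1). If (i, j₁) and (i, j₂) are both Bruhat inversions of w (with the same smaller entry i), then j₁ = j₂. In other words, the map sending a Bruhat inversion (i, j) to its smaller entry i is injective. -/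
/-!
If `(i, j₁)` and `(i, j₂)` are inversions with `j₁ < j₂`, then the value `j₂` must precede `j₁`,
since otherwise `i, j₁, j₂` would form a 231 pattern. But then `j₁` sits strictly between `i` and
`j₂` both in value and in position, so `(i, j₂)` is not a Bruhat inversion.
-/

variable {α β : Type*} [LinearOrder α] [LinearOrder β]

-- `pos v` is the position of the value `v`; for a permutation `w` in one-line notation, `pos = w⁻¹`.
def IsBruhatInversion (pos : α → β) (i j : α) : Prop :=
  i < j ∧ pos j < pos i ∧ ¬∃ l, i < l ∧ l < j ∧ pos j < pos l ∧ pos l < pos i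

def Avoids231 (pos : α → β) : Prop :=
  ¬∃ i l j, i < l ∧ l < j ∧ pos l < pos j ∧ pos j < pos i

namespace Avoids231

variable {pos : α → β}

theorem not_isBruhatInversion_of_lt (havoid : Avoids231 pos) (hpos : Function.Injective pos)
    {i j₁ j₂ : α} (hij₁ : i < j₁) (hj₁ : pos j₁ < pos i) (hlt : j₁ < j₂) :
    ¬IsBruhatInversion pos i j₂ := by
  rintro ⟨-, hj₂, hbruhat⟩
  have hpos_lt : pos j₂ < pos j₁ := by
    refine (hpos.ne hlt.ne').lt_of_le (not_lt.mp fun h ↦ havoid ?_)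
    exact ⟨i, j₁, j₂, hij₁, hlt, h, hj₂⟩
  exact hbruhat ⟨j₁, hij₁, hlt, hpos_lt, hj₁⟩

theorem isBruhatInversion_right_unique (havoid : Avoids231 pos) (hpos : Function.Injective pos)
    {i j₁ j₂ : α} (h₁ : IsBruhatInversion pos i j₁) (h₂ : IsBruhatInversion pos i j₂) :
    j₁ = j₂ := by
  by_contra hne
  rcases Ne.lt_or_gt hne with hlt | hgt
  · exact havoid.not_isBruhatInversion_of_lt hpos h₁.1 h₁.2.1 hlt h₂
  · exact havoid.not_isBruhatInversion_of_lt hpos h₂.1 h₂.2.1 hgt h₁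

end Avoids231

/-- For a 231-avoiding permutation `w` of `Fin (n+1)`, two Bruhat inversions with the same
smaller entry coincide: the map sending a Bruhat inversion `(i, j)` to `i` is injective. -/
theorem bruhatInversion_injective_on_smaller_entry (n : ℕ) (w : Equiv.Perm (Fin (n + 1)))
    (havoid : ¬∃ i l j : Fin (n + 1), i < l ∧ l < j ∧ w⁻¹ l < w⁻¹ j ∧ w⁻¹ j < w⁻¹ i)
    (i j₁ j₂ : Fin (n + 1))
    (h₁ : i < j₁ ∧ w⁻¹ j₁ < w⁻¹ i ∧
      ¬∃ l : Fin (n + 1), i < l ∧ l < j₁ ∧ w⁻¹ j₁ < w⁻¹ l ∧ w⁻¹ l < w⁻¹ i)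
    (h₂ : i < j₂ ∧ w⁻¹ j₂ < w⁻¹ i ∧
      ¬∃ l : Fin (n + 1), i < l ∧ l < j₂ ∧ w⁻¹ j₂ < w⁻¹ l ∧ w⁻¹ l < w⁻¹ i) :
    j₁ = j₂ :=
  Avoids231.isBruhatInversion_right_unique (pos := ⇑w⁻¹) havoid w⁻¹.injective h₁ h₂
end

section
/- Fix n : ℕ and let w be a 231-avoiding permutation of Fin (n+1). If i belongs to the support set of w, i.e. there exists p ≤ i with i < w p, then there exists j with i < j such that (i, j) is a Bruhat inversion of w. In other words, the map sending a Bruhat inversion (i, j) to its smaller entry i hits every element of the support set. -/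
theorem exists_bruhatInversion_of_exists_inversion {α β : Type*} [Finite α] [Preorder α]
    [LinearOrder β] (f : α → β) {i : α} (h : ∃ j, i < j ∧ f j < f i) :
    ∃ j, i < j ∧ f j < f i ∧ ¬∃ l, i < l ∧ l < j ∧ f j < f l ∧ f l < f i := by
  -- among the inversions `(i, j)`, one whose `f j` is largest cannot be split
  obtain ⟨j, ⟨hij, hji⟩, hmax⟩ :=
    Set.exists_max_image {j | i < j ∧ f j < f i} f (Set.toFinite _) h
  exact ⟨j, hij, hji, fun ⟨l, hil, _, hjl, hli⟩ => (hmax l ⟨hil, hli⟩).not_gt hjl⟩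

theorem Equiv.Perm.exists_le_lt_inv_apply {α : Type*} [LinearOrder α] [LocallyFiniteOrderBot α]
    (w : Equiv.Perm α) {i p : α} (hp : p ≤ i) (hwp : i < w p) : ∃ a ≤ i, i < w⁻¹ a := by
  by_contra! h
  exact (Equiv.Perm.perm_symm_on_of_perm_on_finite (p := (· ≤ i)) h hp).not_gt hwp

theorem exists_inversion_of_mem_support_of_avoids_231 {α : Type*} [LinearOrder α]
    [LocallyFiniteOrderBot α] {w : Equiv.Perm α}
    (havoid : ¬∃ i l j : α, i < l ∧ l < j ∧ w⁻¹ l < w⁻¹ j ∧ w⁻¹ j < w⁻¹ i)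
    {i p : α} (hp : p ≤ i) (hwp : i < w p) : ∃ j, i < j ∧ w⁻¹ j < w⁻¹ i := by
  by_contra! h
  have hpos_i : w⁻¹ i < p := by
    refine lt_of_le_of_ne (by simpa using h (w p) hwp) ?_
    rintro rfl
    simp at hwp
  obtain ⟨a, hai, hia⟩ := w.exists_le_lt_inv_apply hp hwp
  have hai : a < i := hai.lt_of_ne (by rintro rfl; exact (hpos_i.trans_le hp).not_gt hia)
  -- the values `a < i < w p` sit at positions `w⁻¹ i < p < w⁻¹ a`: a 231 pattern
  exact havoid ⟨a, i, w p, hai, hwp, by simpa using hpos_i,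
    by simpa using hp.trans_lt hia⟩

/-- For a 231-avoiding permutation `w` of `Fin (n+1)`, every element `i` of the support set
of `w` is the smaller entry of some Bruhat inversion `(i, j)` of `w`. -/
theorem exists_bruhatInversion_of_mem_support (n : ℕ) (w : Equiv.Perm (Fin (n + 1)))
    (havoid : ¬∃ i l j : Fin (n + 1), i < l ∧ l < j ∧ w⁻¹ l < w⁻¹ j ∧ w⁻¹ j < w⁻¹ i)
    (i : Fin (n + 1)) (hi : ∃ p ≤ i, i < w p) :
    ∃ j : Fin (n + 1), i < j ∧ w⁻¹ j < w⁻¹ i ∧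
      ¬∃ l : Fin (n + 1), i < l ∧ l < j ∧ w⁻¹ j < w⁻¹ l ∧ w⁻¹ l < w⁻¹ i := by
  obtain ⟨p, hp, hwp⟩ := hi
  exact exists_bruhatInversion_of_exists_inversion (⇑w⁻¹)
    (exists_inversion_of_mem_support_of_avoids_231 havoid hp hwp)
end

section
/- Let C be a category with zero morphisms which has cokernels and pushouts, and in which monomorphisms are stable under pushout (the pushout of a monomorphism along any morphism is again a monomorphism). Let f : A ⟶ B and g : B ⟶ C be morphisms such that g is both a monomorphism and an epimorphism, and such that the composite f ≫ g is an epimorphism. Then f is an epimorphism. -/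
open CategoryTheory CategoryTheory.Limits

/-!
Given `f ≫ u = f ≫ v`, push `g` out along `u`, then along `v` followed by the first pushout
leg. The legs opposite `g` are monomorphisms, and `g` factors compatibly through the combined
pushout; cancelling the epimorphism `f ≫ g` and then these monomorphisms gives `u = v`.
-/

namespace CategoryTheory

variable {C : Type*} [Category C]

theorem exists_mono_comp_eq_comp_of_mono
    [(MorphismProperty.monomorphisms C).IsStableUnderCobaseChange]
    {B D X : C} (g : B ⟶ D) [Mono g] (u : B ⟶ X) [HasPushout g u] :
    ∃ (Y : C) (k : X ⟶ Y) (j : D ⟶ Y), Mono k ∧ g ≫ j = u ≫ k :=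
  ⟨pushout g u, pushout.inr g u, pushout.inl g u,
    MorphismProperty.pushout_inr (P := MorphismProperty.monomorphisms C) g u ‹Mono g›,
    pushout.condition⟩

end CategoryTheory

theorem epi_of_regular_comp_epi_general {C : Type*} [Category C] [HasPushouts C]
    [(MorphismProperty.monomorphisms C).IsStableUnderCobaseChange]
    {A B D : C} (f : A ⟶ B) (g : B ⟶ D) [Mono g] [Epi (f ≫ g)] :
    Epi f := by
  refine ⟨fun u v h => ?_⟩
  obtain ⟨Y₁, k₁, j₁, _, hu⟩ := exists_mono_comp_eq_comp_of_mono g u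
  obtain ⟨Y₂, k₂, j₂, _, hv⟩ := exists_mono_comp_eq_comp_of_mono g (v ≫ k₁)
  have hj : j₁ ≫ k₂ = j₂ := by
    rw [← cancel_epi (f ≫ g)]
    calc (f ≫ g) ≫ j₁ ≫ k₂ = f ≫ u ≫ k₁ ≫ k₂ := by simp only [Category.assoc, reassoc_of% hu]
      _ = f ≫ v ≫ k₁ ≫ k₂ := by rw [reassoc_of% h]
      _ = (f ≫ g) ≫ j₂ := by rw [Category.assoc, hv, Category.assoc]
  rw [← cancel_mono (k₁ ≫ k₂)]
  calc u ≫ k₁ ≫ k₂ = g ≫ j₁ ≫ k₂ := by rw [reassoc_of% hu]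
    _ = v ≫ k₁ ≫ k₂ := by rw [hj, hv, Category.assoc]

/-- In a category with zero morphisms, cokernels and pushouts, in which monomorphisms are
stable under pushout, if `g` is both a monomorphism and an epimorphism and `f ≫ g` is an
epimorphism, then `f` is an epimorphism. -/
theorem epi_of_regular_comp_epi {C : Type*} [Category C] [HasZeroMorphisms C]
    [HasCokernels C] [HasPushouts C]
    [(MorphismProperty.monomorphisms C).IsStableUnderCobaseChange]
    {A B D : C} (f : A ⟶ B) (g : B ⟶ D) [Mono g] [Epi g] [Epi (f ≫ g)] :
    Epi f :=
  epi_of_regular_comp_epi_general f g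
end
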